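/- Let p be even and let C be the extended CMV matrix of a sequence α : ℤ → ℂ with |α_n| < 1 for all n. If S^p C = C S^p, then α_{n+p} = α_n for all n ∈ ℤ. -/
import Mathlib


open scoped ComplexConjugate

noncomputable section

/-- The two-sided Hilbert space `ℓ²(ℤ, ℂ)`. -/
abbrev HZ : Type := lp (fun _ : ℤ => ℂ) 2

/-- `ρ_n = (1 − |α_n|²)^{1/2}`. -/
def rho (α : ℤ → ℂ) (n : ℤ) : ℝ := Real.sqrt (1 - ‖α n‖ ^ 2)

/-- `L` acts as the even-indexed CMV factor. -/
def IsCMVL (α : ℤ → ℂ) (L : HZ →L[ℂ] HZ) : Prop :=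
  ∀ (u : HZ) (m : ℤ),
    (L u) (2 * m) = conj (α (2 * m)) * u (2 * m) + (rho α (2 * m) : ℂ) * u (2 * m + 1) ∧
    (L u) (2 * m + 1) = (rho α (2 * m) : ℂ) * u (2 * m) - α (2 * m) * u (2 * m + 1)

/-- `M` acts as the odd-indexed CMV factor. -/
def IsCMVM (α : ℤ → ℂ) (M : HZ →L[ℂ] HZ) : Prop :=
  ∀ (u : HZ) (m : ℤ),
    (M u) (2 * m + 1) = conj (α (2 * m + 1)) * u (2 * m + 1)
        + (rho α (2 * m + 1) : ℂ) * u (2 * m + 2) ∧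
    (M u) (2 * m + 2) = (rho α (2 * m + 1) : ℂ) * u (2 * m + 1)
        - α (2 * m + 1) * u (2 * m + 2)

set_option maxHeartbeats 1000000

/-- if the extended CMV matrix `C = LM` commutes with `S^p`
(`p` even), then the Verblunsky coefficients are `p`-periodic. -/
theorem statement10 (p : ℕ) (hpeven : Even p) (hppos : 0 < p)
    (α : ℤ → ℂ) (hα : ∀ n, ‖α n‖ < 1)
    (L M : HZ →L[ℂ] HZ) (hL : IsCMVL α L) (hM : IsCMVM α M)
    (S : HZ →L[ℂ] HZ) (hS : ∀ (u : HZ) (n : ℤ), (S u) n = u (n - 1))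
    (hcomm : S ^ p * (L * M) = (L * M) * S ^ p) :
    ∀ n : ℤ, α (n + p) = α n := by
  obtain ⟨q', hq'⟩ := hpeven
  set q : ℤ := (q' : ℤ) with hqdef
  have hp2 : (p : ℤ) = 2 * q := by rw [hq']; push_cast; ring
  have hsub : ∀ n, 0 < 1 - ‖α n‖ ^ 2 := by
    intro n; nlinarith [hα n, norm_nonneg (α n)]
  have hρpos : ∀ n, 0 < rho α n := fun n => Real.sqrt_pos.mpr (hsub n)
  have hρsq : ∀ n, rho α n ^ 2 = 1 - ‖α n‖ ^ 2 := fun n => Real.sq_sqrt (hsub n).le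
  set e : ℤ → HZ := fun k => lp.single 2 k 1 with hedef
  have he : ∀ k j : ℤ, (e k) j = if j = k then 1 else 0 := by
    intro k j; rw [hedef]; rw [lp.single_apply]; split_ifs <;> simp_all
  have hSp : ∀ (k : ℕ) (u : HZ) (n : ℤ), ((S ^ k) u) n = u (n - k) := by
    intro k
    induction k with
    | zero => intro u n; simp
    | succ k ih =>
      intro u n
      have h1 : (S ^ (k + 1)) u = (S ^ k) (S u) := by
        rw [pow_succ]; rfl
      rw [h1, ih, hS]
      congr 1; push_cast; ring
  have hkey : ∀ (u : HZ) (n : ℤ), (L (M u)) (n - p) = (L (M ((S ^ p) u))) n := by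
    intro u n
    have h := congrArg (fun T : HZ →L[ℂ] HZ => (T u) n) hcomm
    simp only [ContinuousLinearMap.mul_apply] at h
    rw [hSp] at h
    exact h
  have hCeven : ∀ (u : HZ) (m : ℤ), (L (M u)) (2 * m)
      = conj (α (2 * m)) * ((rho α (2 * m - 1) : ℂ) * u (2 * m - 1) - α (2 * m - 1) * u (2 * m))
        + (rho α (2 * m) : ℂ) * (conj (α (2 * m + 1)) * u (2 * m + 1)
            + (rho α (2 * m + 1) : ℂ) * u (2 * m + 2)) := by
    intro u m
    have h1 := (hL (M u) m).1
    have h2 := (hM u (m - 1)).2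
    have h3 := (hM u m).1
    rw [show (2 * (m - 1) + 2 : ℤ) = 2 * m from by ring,
        show (2 * (m - 1) + 1 : ℤ) = 2 * m - 1 from by ring] at h2
    rw [h2, h3] at h1
    exact h1
  have hCodd : ∀ (u : HZ) (m : ℤ), (L (M u)) (2 * m + 1)
      = (rho α (2 * m) : ℂ) * ((rho α (2 * m - 1) : ℂ) * u (2 * m - 1) - α (2 * m - 1) * u (2 * m))
        - α (2 * m) * (conj (α (2 * m + 1)) * u (2 * m + 1)
            + (rho α (2 * m + 1) : ℂ) * u (2 * m + 2)) := by
    intro u m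
    have h1 := (hL (M u) m).2
    have h2 := (hM u (m - 1)).2
    have h3 := (hM u m).1
    rw [show (2 * (m - 1) + 2 : ℤ) = 2 * m from by ring,
        show (2 * (m - 1) + 1 : ℤ) = 2 * m - 1 from by ring] at h2
    rw [h2, h3] at h1
    exact h1
  have entryE : ∀ (k m : ℤ), (L (M (e k))) (2 * m) = (L (M ((S ^ p) (e k)))) (2 * (m + q)) := by
    intro k m
    have h := hkey (e k) (2 * (m + q))
    rw [show (2 * (m + q) - (p : ℤ)) = 2 * m from by rw [hp2]; ring] at h
    exact h
  have entryO : ∀ (k m : ℤ),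
      (L (M (e k))) (2 * m + 1) = (L (M ((S ^ p) (e k)))) (2 * (m + q) + 1) := by
    intro k m
    have h := hkey (e k) (2 * (m + q) + 1)
    rw [show (2 * (m + q) + 1 - (p : ℤ)) = 2 * m + 1 from by rw [hp2]; ring] at h
    exact h
  -- F1 : conj α(2(m+q)) ρ(2(m+q)-1) = conj α(2m) ρ(2m-1)
  have F1 : ∀ m : ℤ, conj (α (2 * (m + q))) * (rho α (2 * (m + q) - 1) : ℂ)
      = conj (α (2 * m)) * (rho α (2 * m - 1) : ℂ) := by
    intro m
    have h := entryE (2 * m - 1) m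
    rw [hCeven (e (2 * m - 1)) m, hCeven ((S ^ p) (e (2 * m - 1))) (m + q)] at h
    simp only [hSp, he] at h
    split_ifs at h <;> first | omega | linear_combination -h
  -- F3 : ρ(2(m+q)) conj α(2(m+q)+1) = ρ(2m) conj α(2m+1)
  have F3 : ∀ m : ℤ, (rho α (2 * (m + q)) : ℂ) * conj (α (2 * (m + q) + 1))
      = (rho α (2 * m) : ℂ) * conj (α (2 * m + 1)) := by
    intro m
    have h := entryE (2 * m + 1) m
    rw [hCeven (e (2 * m + 1)) m, hCeven ((S ^ p) (e (2 * m + 1))) (m + q)] at h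
    simp only [hSp, he] at h
    split_ifs at h <;> first | omega | linear_combination -h
  -- F4 : ρ(2(m+q)) ρ(2(m+q)+1) = ρ(2m) ρ(2m+1)
  have F4 : ∀ m : ℤ, (rho α (2 * (m + q)) : ℂ) * (rho α (2 * (m + q) + 1) : ℂ)
      = (rho α (2 * m) : ℂ) * (rho α (2 * m + 1) : ℂ) := by
    intro m
    have h := entryE (2 * m + 2) m
    rw [hCeven (e (2 * m + 2)) m, hCeven ((S ^ p) (e (2 * m + 2))) (m + q)] at h
    simp only [hSp, he] at h
    split_ifs at h <;> first | omega | linear_combination -h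
  -- O4 : α(2(m+q)) ρ(2(m+q)+1) = α(2m) ρ(2m+1)
  have O4 : ∀ m : ℤ, α (2 * (m + q)) * (rho α (2 * (m + q) + 1) : ℂ)
      = α (2 * m) * (rho α (2 * m + 1) : ℂ) := by
    intro m
    have h := entryO (2 * m + 2) m
    rw [hCodd (e (2 * m + 2)) m, hCodd ((S ^ p) (e (2 * m + 2))) (m + q)] at h
    simp only [hSp, he] at h
    split_ifs at h <;> first | omega | linear_combination h
  have habs : ∀ n, |rho α n| = rho α n := fun n => abs_of_pos (hρpos n)
  -- real-norm versions
  have F3n : ∀ m : ℤ, rho α (2 * (m + q)) * ‖α (2 * (m + q) + 1)‖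
      = rho α (2 * m) * ‖α (2 * m + 1)‖ := by
    intro m
    have h := congrArg norm (F3 m)
    simpa [norm_mul, Complex.norm_real, Real.norm_eq_abs, habs, RCLike.norm_conj] using h
  have F4n : ∀ m : ℤ, rho α (2 * (m + q)) * rho α (2 * (m + q) + 1)
      = rho α (2 * m) * rho α (2 * m + 1) := by
    intro m
    have h := congrArg norm (F4 m)
    simpa [norm_mul, Complex.norm_real, Real.norm_eq_abs, habs] using h
  have O4n : ∀ m : ℤ, ‖α (2 * (m + q))‖ * rho α (2 * (m + q) + 1)
      = ‖α (2 * m)‖ * rho α (2 * m + 1) := by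
    intro m
    have h := congrArg norm (O4 m)
    simpa [norm_mul, Complex.norm_real, Real.norm_eq_abs, habs] using h
  have sq_to_eq : ∀ a b : ℝ, 0 < a → 0 < b → a ^ 2 = b ^ 2 → a = b := by
    intro a b ha hb h
    have := congrArg Real.sqrt h
    rwa [Real.sqrt_sq ha.le, Real.sqrt_sq hb.le] at this
  have hρ_even : ∀ m : ℤ, rho α (2 * (m + q)) = rho α (2 * m) := by
    intro m
    apply sq_to_eq _ _ (hρpos _) (hρpos _)
    have e1 := hρsq (2 * (m + q) + 1)
    have e2 := hρsq (2 * m + 1)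
    linear_combination
      (rho α (2 * (m + q)) * rho α (2 * (m + q) + 1)
        + rho α (2 * m) * rho α (2 * m + 1)) * F4n m
      + (rho α (2 * (m + q)) * ‖α (2 * (m + q) + 1)‖
        + rho α (2 * m) * ‖α (2 * m + 1)‖) * F3n m
      - rho α (2 * (m + q)) ^ 2 * e1 + rho α (2 * m) ^ 2 * e2
  have hρ_odd : ∀ m : ℤ, rho α (2 * (m + q) + 1) = rho α (2 * m + 1) := by
    intro m
    apply sq_to_eq _ _ (hρpos _) (hρpos _)
    have e1 := hρsq (2 * (m + q))
    have e2 := hρsq (2 * m)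
    linear_combination
      (rho α (2 * (m + q)) * rho α (2 * (m + q) + 1)
        + rho α (2 * m) * rho α (2 * m + 1)) * F4n m
      + (‖α (2 * (m + q))‖ * rho α (2 * (m + q) + 1)
        + ‖α (2 * m)‖ * rho α (2 * m + 1)) * O4n m
      - rho α (2 * (m + q) + 1) ^ 2 * e1 + rho α (2 * m + 1) ^ 2 * e2
  have hα_odd : ∀ m : ℤ, α (2 * (m + q) + 1) = α (2 * m + 1) := by
    intro m
    have h := F3 m
    rw [hρ_even m] at h
    have hne : ((rho α (2 * m) : ℂ)) ≠ 0 := by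
      exact_mod_cast (hρpos (2 * m)).ne'
    have h2 := mul_left_cancel₀ hne h
    have h3 := congrArg (starRingEnd ℂ) h2
    simpa using h3
  have hα_even : ∀ m : ℤ, α (2 * (m + q)) = α (2 * m) := by
    intro m
    have h := F1 m
    have hro := hρ_odd (m - 1)
    rw [show (2 * (m - 1 + q) + 1 : ℤ) = 2 * (m + q) - 1 from by ring,
        show (2 * (m - 1) + 1 : ℤ) = 2 * m - 1 from by ring] at hro
    rw [hro] at h
    have hne : ((rho α (2 * m - 1) : ℂ)) ≠ 0 := by
      exact_mod_cast (hρpos (2 * m - 1)).ne'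
    have h2 := mul_right_cancel₀ hne h
    have h3 := congrArg (starRingEnd ℂ) h2
    simpa using h3
  intro n
  rcases Int.even_or_odd n with ⟨m, hm⟩ | ⟨m, hm⟩
  · rw [hm, hp2]
    have h := hα_even m
    rw [show (2 * (m + q) : ℤ) = m + m + 2 * q from by ring,
        show (2 * m : ℤ) = m + m from by ring] at h
    exact h
  · rw [hm, hp2]
    have h := hα_odd m
    rw [show (2 * (m + q) + 1 : ℤ) = 2 * m + 1 + 2 * q from by ring] at h
    exact h
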